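/- Let F ↦ Q̃*_{β,F} be defined by Q̃*_{β,F}(s̄*,t̄*) = e^{ε − F φ_F(t*_{q−1})} Q̃*_β(s̄*,t̄*), where ε > 0 is fixed, φ_F(s*) = s* for s* ∈ {1,…,q}, and φ_F(⋆) is defined by e^{−F φ_F(⋆)} K(⋆) = ∑_{t>q} e^{−Ft} K(t). Let λ_F be its Perron–Frobenius eigenvalue. Then F ↦ λ_F is continuous and strictly decreasing on (0,∞), λ_F → 0 as F → ∞, λ_0 = e^ε > 1, and hence there is a unique F̃(ε) > 0 with λ_{F̃(ε)} = 1. -/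

import Mathlib

/-!
Write `Q̃*_{β,F} = D · diag(e^{g_F})`, where `D` is the Doob transform of `Q*_β` (a stochastic
matrix) and `g_F(t) = ε − F φ_F(t*_{q−1})`. For a nonnegative matrix with a positive eigenvector,
the eigenvalue is monotone in the entries, so moving every log-weight by at most `δ` moves `λ_F` by
a factor in `[e^{−δ}, e^{δ}]`. Each `F ↦ F φ_F(t)` is continuous, strictly increasing and at least
`F` (for `⋆` because `F φ_F(⋆) = log K(⋆) − log ∑_{t>q} e^{−Ft} K(t)`), so `λ_F` is continuous,
strictly decreasing and at most `e^{−F} λ_0`, while `λ_0 = e^ε` since `D` is stochastic. The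
intermediate value theorem gives the crossing.
-/

open scoped Classical
open Filter Matrix

/-- `K(⋆) = ∑_{n>q} K(n)` for the cemetery state `0`; `K(e)` for `e ∈ {1,…,q}`.
States in `Fin (q+1)`: `0` is the cemetery state `⋆`, and `e ≥ 1` codes a jump of size `e`. -/
noncomputable def Kstar (q : ℕ) (K : ℕ → ℝ) (e : Fin (q + 1)) : ℝ :=
  if e.1 = 0 then ∑' n : ℕ, K (n + q + 1) else K e.1

/-- `G(t̄*) = ∑_{k=0}^{q−1} ρ_{t*_0+⋯+t*_k}` with the conventions `ρ_⋆ = 0`, `⋆ + t = ⋆`. -/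
noncomputable def Gfun (q : ℕ) (ρ : ℕ → ℝ) (t : Fin q → Fin (q + 1)) : ℝ :=
  ∑ k : Fin q, if ∀ j, j ≤ k → (t j).1 ≠ 0 then ρ (∑ j ∈ Finset.Iic k, (t j).1) else 0

/-- Last coordinate `t_{q−1}` of a `q`-tuple. -/
noncomputable def lastE {q : ℕ} (t : Fin q → Fin (q + 1)) : Fin (q + 1) :=
  if h : 0 < q then t ⟨q - 1, by omega⟩ else 0

/-- The shift consistency condition `s_i = t_{i−1}` for `1 ≤ i ≤ q−1`. -/
def shiftOK {q : ℕ} (s t : Fin q → Fin (q + 1)) : Prop :=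
  ∀ i : Fin q, 1 ≤ i.1 → s i = t ⟨i.1 - 1, lt_of_le_of_lt (Nat.sub_le _ _) i.isLt⟩

/-- The transfer matrix `Q*_β` on `E^q`, `E = {1,…,q,⋆}`:
`Q*_β(s̄*,t̄*) = e^{β²G(t̄*)} (K(t*_{q−1})/(1−K(∞))) ∏_{i=1}^{q−1} 1_{s*_i=t*_{i−1}}`. -/
noncomputable def Qmat (q : ℕ) (β : ℝ) (K ρ : ℕ → ℝ) (Kinf : ℝ) :
    Matrix (Fin q → Fin (q + 1)) (Fin q → Fin (q + 1)) ℝ := fun s t =>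
  Real.exp (β ^ 2 * Gfun q ρ t) * (Kstar q K (lastE t) / (1 - Kinf)) *
    (if shiftOK s t then 1 else 0)

/-- A nonnegative matrix is irreducible if some power connects any two indices. -/
def MatIrreducible {n : Type*} [Fintype n] [DecidableEq n] (A : Matrix n n ℝ) : Prop :=
  ∀ i j, ∃ k : ℕ, 0 < k ∧ 0 < (A ^ k) i j

/-- A nonnegative matrix is primitive if some power has all entries positive. -/
def MatPrimitive {n : Type*} [Fintype n] [DecidableEq n] (A : Matrix n n ℝ) : Prop :=
  ∃ k : ℕ, 0 < k ∧ ∀ i j, 0 < (A ^ k) i j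

/-- The tilted Doob-transformed transfer matrix `Q̃*_{β,F}`, with entries
`e^{ε − F φ_F(t*_{q−1})} Q̃*_β(s̄*,t̄*)`, where `φ_F(s*) = s*` for `s* ∈ {1,…,q}` and
`φF : ℝ → ℝ` gives the value `φ_F(⋆)`. -/
noncomputable def QtiltF (q : ℕ) (β ε : ℝ) (K ρ : ℕ → ℝ)
    (lam : ℝ) (νs : (Fin q → Fin (q + 1)) → ℝ) (φF : ℝ → ℝ) (F : ℝ) :
    Matrix (Fin q → Fin (q + 1)) (Fin q → Fin (q + 1)) ℝ := fun s t =>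
  Real.exp (ε - F * (if (lastE t).1 = 0 then φF F else ((lastE t).1 : ℝ))) *
    (Qmat q β K ρ 0 s t * νs t / (lam * νs s))

open Real Set Topology

namespace Matrix

variable {ι : Type*} [Fintype ι]

def HasPosEigenvector (A : Matrix ι ι ℝ) (r : ℝ) : Prop :=
  ∃ v : ι → ℝ, (∀ i, 0 < v i) ∧ A *ᵥ v = r • v

theorem HasPosEigenvector.smul {A : Matrix ι ι ℝ} {r : ℝ} (h : A.HasPosEigenvector r) (c : ℝ) :
    (c • A).HasPosEigenvector (c * r) := by
  obtain ⟨v, hv, hAv⟩ := h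
  exact ⟨v, hv, by rw [smul_mulVec, hAv, smul_smul]⟩

theorem hasPosEigenvector_one_of_mulVec_one {A : Matrix ι ι ℝ} (h : A *ᵥ 1 = 1) :
    A.HasPosEigenvector 1 :=
  ⟨1, fun _ => one_pos, by rw [h, one_smul]⟩

theorem mulVec_apply_le_of_le {A B : Matrix ι ι ℝ} {w : ι → ℝ} (hBA : ∀ i j, B i j ≤ A i j)
    (hw : ∀ j, 0 ≤ w j) (i : ι) : (B *ᵥ w) i ≤ (A *ᵥ w) i :=
  Finset.sum_le_sum fun j _ => mul_le_mul_of_nonneg_right (hBA i j) (hw j)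

theorem mulVec_apply_lt_of_lt {A B : Matrix ι ι ℝ} {w : ι → ℝ} {i : ι} (hBA : ∀ j, B i j ≤ A i j)
    (hlt : ∃ j, B i j < A i j) (hw : ∀ j, 0 < w j) : (B *ᵥ w) i < (A *ᵥ w) i := by
  obtain ⟨j, hj⟩ := hlt
  exact Finset.sum_lt_sum (fun k _ => mul_le_mul_of_nonneg_right (hBA k) (hw k).le)
    ⟨j, Finset.mem_univ _, mul_lt_mul_of_pos_right hj (hw j)⟩

theorem exists_pos_of_mulVec_one {A : Matrix ι ι ℝ} (hA : ∀ i j, 0 ≤ A i j) (h : A *ᵥ 1 = 1)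
    (i : ι) : ∃ j, 0 < A i j := by
  by_contra! hzero
  have hrow : (A *ᵥ 1) i = 0 :=
    Finset.sum_eq_zero fun j _ => by
      rw [Pi.one_apply, mul_one]
      exact le_antisymm (hzero j) (hA i j)
  simp [h] at hrow

namespace HasPosEigenvector

variable [Nonempty ι] {A B : Matrix ι ι ℝ} {r r' μ : ℝ}

/-- The index is one maximising `w / v`, for `v` the positive eigenvector. -/
theorem exists_mulVec_le (hA : ∀ i j, 0 ≤ A i j) (h : A.HasPosEigenvector r) (w : ι → ℝ) :
    ∃ i, (A *ᵥ w) i ≤ r * w i := by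
  obtain ⟨v, hv, hAv⟩ := h
  obtain ⟨i, hi⟩ := Finite.exists_max fun j => w j / v j
  have hwv : ∀ j, w j ≤ (w i / v i) * v j := fun j => by
    have := hi j
    rwa [div_le_iff₀ (hv j)] at this
  refine ⟨i, ?_⟩
  calc (A *ᵥ w) i ≤ (A *ᵥ ((w i / v i) • v)) i :=
        Finset.sum_le_sum fun j _ => mul_le_mul_of_nonneg_left (hwv j) (hA i j)
    _ = r * w i := by
        rw [mulVec_smul, hAv, smul_smul, Pi.smul_apply, smul_eq_mul]
        field_simp [(hv i).ne']

theorem le_of_smul_le_mulVec (hA : ∀ i j, 0 ≤ A i j) (h : A.HasPosEigenvector r) {w : ι → ℝ}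
    (hw : ∀ i, 0 < w i) (hμ : ∀ i, μ * w i ≤ (A *ᵥ w) i) : μ ≤ r := by
  obtain ⟨i, hi⟩ := h.exists_mulVec_le hA w
  exact le_of_mul_le_mul_right ((hμ i).trans hi) (hw i)

theorem lt_of_smul_lt_mulVec (hA : ∀ i j, 0 ≤ A i j) (h : A.HasPosEigenvector r) {w : ι → ℝ}
    (hw : ∀ i, 0 < w i) (hμ : ∀ i, μ * w i < (A *ᵥ w) i) : μ < r := by
  obtain ⟨i, hi⟩ := h.exists_mulVec_le hA w
  exact lt_of_mul_lt_mul_right ((hμ i).trans_le hi) (hw i).le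

theorem nonneg (hA : ∀ i j, 0 ≤ A i j) (h : A.HasPosEigenvector r) : 0 ≤ r := by
  obtain ⟨v, hv, -⟩ := id h
  refine h.le_of_smul_le_mulVec hA hv fun i => ?_
  rw [zero_mul]
  exact Finset.sum_nonneg fun j _ => mul_nonneg (hA i j) (hv j).le

theorem le_of_le (hA : ∀ i j, 0 ≤ A i j) (h : A.HasPosEigenvector r)
    (hBA : ∀ i j, B i j ≤ A i j) (hB : B.HasPosEigenvector r') : r' ≤ r := by
  obtain ⟨w, hw, hBw⟩ := hB
  refine h.le_of_smul_le_mulVec hA hw fun i => ?_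
  calc r' * w i = (B *ᵥ w) i := by rw [hBw, Pi.smul_apply, smul_eq_mul]
    _ ≤ (A *ᵥ w) i := mulVec_apply_le_of_le hBA (fun j => (hw j).le) i

theorem lt_of_lt (hA : ∀ i j, 0 ≤ A i j) (h : A.HasPosEigenvector r)
    (hBA : ∀ i j, B i j ≤ A i j) (hlt : ∀ i, ∃ j, B i j < A i j) (hB : B.HasPosEigenvector r') :
    r' < r := by
  obtain ⟨w, hw, hBw⟩ := hB
  refine h.lt_of_smul_lt_mulVec hA hw fun i => ?_
  calc r' * w i = (B *ᵥ w) i := by rw [hBw, Pi.smul_apply, smul_eq_mul]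
    _ < (A *ᵥ w) i := mulVec_apply_lt_of_lt (hBA i) (hlt i) hw

theorem unique (hA : ∀ i j, 0 ≤ A i j) (h : A.HasPosEigenvector r)
    (h' : A.HasPosEigenvector r') : r = r' :=
  le_antisymm (h'.le_of_le hA (fun _ _ => le_rfl) h) (h.le_of_le hA (fun _ _ => le_rfl) h')

end HasPosEigenvector

end Matrix

section ColumnTilt

variable {ι : Type*} [Fintype ι] [DecidableEq ι] {D : Matrix ι ι ℝ}

theorem mul_diagonal_exp_nonneg (hD : ∀ i j, 0 ≤ D i j) (g : ι → ℝ) (i j : ι) :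
    0 ≤ (D * diagonal (exp ∘ g)) i j := by
  rw [mul_diagonal]
  exact mul_nonneg (hD i j) (exp_pos _).le

variable [Nonempty ι]

theorem Matrix.HasPosEigenvector.le_exp_mul_of_le_add (hD : ∀ i j, 0 ≤ D i j)
    {g g₀ : ι → ℝ} {δ r r₀ : ℝ}
    (hg : ∀ j, g j ≤ g₀ j + δ) (h : (D * diagonal (exp ∘ g)).HasPosEigenvector r)
    (h₀ : (D * diagonal (exp ∘ g₀)).HasPosEigenvector r₀) : r ≤ exp δ * r₀ := by
  refine (h₀.smul (exp δ)).le_of_le (fun i j => ?_) (fun i j => ?_) h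
  · exact mul_nonneg (exp_pos δ).le (mul_diagonal_exp_nonneg hD g₀ i j)
  · simp only [smul_apply, mul_diagonal, Function.comp_apply, smul_eq_mul]
    calc D i j * exp (g j) ≤ D i j * exp (g₀ j + δ) := by gcongr; exacts [hD i j, hg j]
      _ = exp δ * (D i j * exp (g₀ j)) := by rw [exp_add]; ring

theorem Matrix.HasPosEigenvector.lt_of_lt_of_exists_pos (hD : ∀ i j, 0 ≤ D i j)
    (hrow : ∀ i, ∃ j, 0 < D i j) {g g₀ : ι → ℝ} {r r₀ : ℝ} (hg : ∀ j, g j < g₀ j)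
    (h : (D * diagonal (exp ∘ g)).HasPosEigenvector r)
    (h₀ : (D * diagonal (exp ∘ g₀)).HasPosEigenvector r₀) : r < r₀ := by
  refine h₀.lt_of_lt (mul_diagonal_exp_nonneg hD g₀) (fun i j => ?_) (fun i => ?_) h
  · simp only [mul_diagonal, Function.comp_apply]
    exact mul_le_mul_of_nonneg_left (exp_le_exp.2 (hg j).le) (hD i j)
  · obtain ⟨j, hj⟩ := hrow i
    refine ⟨j, ?_⟩
    simp only [mul_diagonal, Function.comp_apply]
    exact mul_lt_mul_of_pos_left (exp_lt_exp.2 (hg j)) hj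

variable {g : ℝ → ι → ℝ} {r : ℝ → ℝ} {S : Set ℝ}

theorem continuousOn_of_hasPosEigenvector_mul_diagonal_exp (hD : ∀ i j, 0 ≤ D i j)
    (hg : ∀ j, ContinuousOn (g · j) S)
    (hr : ∀ F ∈ S, (D * diagonal (exp ∘ g F)).HasPosEigenvector (r F)) : ContinuousOn r S := by
  intro F₀ hF₀
  set δ : ℝ → ℝ := fun F => ∑ j, |g F j - g F₀ j|
  have hδ : Tendsto δ (𝓝[S] F₀) (𝓝 0) := by
    simpa using tendsto_finsetSum Finset.univ fun j _ => ((hg j F₀ hF₀).sub_const (g F₀ j)).abs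
  have hdev : ∀ F j, |g F j - g F₀ j| ≤ δ F := fun F j =>
    Finset.single_le_sum (f := fun j => |g F j - g F₀ j|) (fun _ _ => abs_nonneg _)
      (Finset.mem_univ j)
  have hupper : ∀ F ∈ S, r F ≤ exp (δ F) * r F₀ := fun F hF =>
    (hr F hF).le_exp_mul_of_le_add hD (fun j => by linarith [(abs_le.1 (hdev F j)).2])
      (hr F₀ hF₀)
  have hlower : ∀ F ∈ S, exp (-δ F) * r F₀ ≤ r F := fun F hF => by
    rw [exp_neg, inv_mul_le_iff₀ (exp_pos _)]
    exact (hr F₀ hF₀).le_exp_mul_of_le_add hD (fun j => by linarith [(abs_le.1 (hdev F j)).1])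
      (hr F hF)
  have hlim : ∀ c : ℝ, Tendsto (fun F => exp (c * δ F) * r F₀) (𝓝[S] F₀) (𝓝 (r F₀)) := fun c => by
    have hcδ := hδ.const_mul c
    rw [mul_zero] at hcδ
    simpa using ((continuous_exp.tendsto 0).comp hcδ).mul_const (r F₀)
  refine tendsto_of_tendsto_of_tendsto_of_le_of_le' (by simpa using hlim (-1))
    (by simpa using hlim 1) ?_ ?_
  · exact eventually_mem_nhdsWithin.mono hlower
  · exact eventually_mem_nhdsWithin.mono hupper

theorem strictAntiOn_of_hasPosEigenvector_mul_diagonal_exp (hD : ∀ i j, 0 ≤ D i j)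
    (hrow : ∀ i, ∃ j, 0 < D i j) (hg : ∀ j, StrictAntiOn (g · j) S)
    (hr : ∀ F ∈ S, (D * diagonal (exp ∘ g F)).HasPosEigenvector (r F)) : StrictAntiOn r S :=
  fun _ hF _ hF' hlt =>
    (hr _ hF').lt_of_lt_of_exists_pos hD hrow (fun j => hg j hF hF' hlt) (hr _ hF)

theorem tendsto_zero_of_hasPosEigenvector_mul_diagonal_exp (hD : ∀ i j, 0 ≤ D i j)
    (hg : ∀ F, 0 ≤ F → ∀ j, g F j ≤ g 0 j - F)
    (hr : ∀ F, 0 ≤ F → (D * diagonal (exp ∘ g F)).HasPosEigenvector (r F)) :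
    Tendsto r atTop (𝓝 0) := by
  have hupper : ∀ F, 0 ≤ F → r F ≤ exp (-F) * r 0 := fun F hF =>
    (hr F hF).le_exp_mul_of_le_add hD (fun j => by linarith [hg F hF j]) (hr 0 le_rfl)
  refine tendsto_of_tendsto_of_tendsto_of_le_of_le' tendsto_const_nhds
    (by simpa using tendsto_exp_neg_atTop_nhds_zero.mul_const (r 0)) ?_ ?_
  · exact (eventually_ge_atTop 0).mono fun F hF => (hr F hF).nonneg (mul_diagonal_exp_nonneg hD _)
  · exact (eventually_ge_atTop 0).mono hupper

end ColumnTilt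

theorem existsUnique_gt_and_eq_of_strictAntiOn_Ici {f : ℝ → ℝ} {a c l : ℝ}
    (hcont : ContinuousOn f (Ici a)) (hanti : StrictAntiOn f (Ici a))
    (hlim : Tendsto f atTop (𝓝 l)) (hl : l < c) (hc : c < f a) : ∃! x, a < x ∧ f x = c := by
  obtain ⟨b, hbc, hab⟩ :=
    ((hlim.eventually (eventually_lt_nhds hl)).and (eventually_ge_atTop a)).exists
  obtain ⟨x, hx, hfx⟩ :=
    intermediate_value_Icc' hab (hcont.mono Icc_subset_Ici_self) ⟨hbc.le, hc.le⟩
  have hax : a < x := hx.1.lt_of_ne fun hax => hc.ne' (hax ▸ hfx)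
  exact ⟨x, ⟨hax, hfx⟩, fun y ⟨hay, hfy⟩ => hanti.injOn hay.le hax.le (hfy.trans hfx.symm)⟩

noncomputable def laplaceSeries (a x : ℕ → ℝ) (F : ℝ) : ℝ :=
  ∑' n, exp (-F * x n) * a n

section LaplaceSeries

variable {a x : ℕ → ℝ}

theorem laplaceSeries_term_le (ha : ∀ n, 0 ≤ a n) (hx : ∀ n, 0 ≤ x n) {F : ℝ} (hF : 0 ≤ F)
    (n : ℕ) : exp (-F * x n) * a n ≤ a n :=
  mul_le_of_le_one_left (ha n) (exp_le_one_iff.2 (by nlinarith [hx n]))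

theorem summable_laplaceSeries (ha : ∀ n, 0 ≤ a n) (hx : ∀ n, 0 ≤ x n) (hs : Summable a)
    {F : ℝ} (hF : 0 ≤ F) : Summable fun n => exp (-F * x n) * a n :=
  hs.of_nonneg_of_le (fun n => mul_nonneg (exp_pos _).le (ha n)) (laplaceSeries_term_le ha hx hF)

theorem laplaceSeries_pos (ha : ∀ n, 0 ≤ a n) (hx : ∀ n, 0 ≤ x n) (hs : Summable a) {i : ℕ}
    (hi : 0 < a i) {F : ℝ} (hF : 0 ≤ F) : 0 < laplaceSeries a x F :=
  (summable_laplaceSeries ha hx hs hF).tsum_pos (fun n => mul_nonneg (exp_pos _).le (ha n)) i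
    (mul_pos (exp_pos _) hi)

theorem continuousOn_laplaceSeries (ha : ∀ n, 0 ≤ a n) (hx : ∀ n, 0 ≤ x n) (hs : Summable a) :
    ContinuousOn (laplaceSeries a x) (Ici 0) :=
  continuousOn_tsum (fun n => (by fun_prop : Continuous fun F => exp (-F * x n) * a n).continuousOn)
    hs fun n F hF => by
      rw [Real.norm_of_nonneg (mul_nonneg (exp_pos _).le (ha n))]
      exact laplaceSeries_term_le ha hx hF n

theorem strictAntiOn_laplaceSeries (ha : ∀ n, 0 ≤ a n) (hx : ∀ n, 0 < x n) (hs : Summable a)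
    {i : ℕ} (hi : 0 < a i) : StrictAntiOn (laplaceSeries a x) (Ici 0) := by
  intro F hF F' hF' hlt
  have hx₀ : ∀ n, 0 ≤ x n := fun n => (hx n).le
  refine Summable.tsum_lt_tsum (i := i) (fun n => ?_) ?_ (summable_laplaceSeries ha hx₀ hs hF')
    (summable_laplaceSeries ha hx₀ hs hF)
  · exact mul_le_mul_of_nonneg_right (exp_le_exp.2 (by nlinarith [hx n])) (ha n)
  · exact mul_lt_mul_of_pos_right (exp_lt_exp.2 (by nlinarith [hx i])) hi

theorem laplaceSeries_le_exp_neg_mul (ha : ∀ n, 0 ≤ a n) (hx : ∀ n, 1 ≤ x n) (hs : Summable a)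
    {F : ℝ} (hF : 0 ≤ F) : laplaceSeries a x F ≤ exp (-F) * ∑' n, a n := by
  rw [← tsum_mul_left]
  refine Summable.tsum_le_tsum (fun n => ?_)
    (summable_laplaceSeries ha (fun n => zero_le_one.trans (hx n)) hs hF) (hs.mul_left _)
  exact mul_le_mul_of_nonneg_right (exp_le_exp.2 (by nlinarith [hx n])) (ha n)

variable {φ : ℝ → ℝ}

theorem mul_eq_log_sub_log_laplaceSeries (ha : ∀ n, 0 ≤ a n) (hs : Summable a) {i : ℕ}
    (hi : 0 < a i)
    (hφ : ∀ F, 0 ≤ F → exp (-F * φ F) * ∑' n, a n = laplaceSeries a x F) {F : ℝ} (hF : 0 ≤ F) :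
    F * φ F = log (∑' n, a n) - log (laplaceSeries a x F) := by
  have hlog := congrArg log (hφ F hF)
  rw [log_mul (exp_pos _).ne' (hs.tsum_pos ha i hi).ne', log_exp] at hlog
  linarith

theorem continuousOn_mul_of_exp_mul_eq_laplaceSeries (ha : ∀ n, 0 ≤ a n) (hx : ∀ n, 0 ≤ x n)
    (hs : Summable a) {i : ℕ} (hi : 0 < a i)
    (hφ : ∀ F, 0 ≤ F → exp (-F * φ F) * ∑' n, a n = laplaceSeries a x F) :
    ContinuousOn (fun F => F * φ F) (Ici 0) :=
  (continuousOn_const.sub ((continuousOn_laplaceSeries ha hx hs).log fun _ hF =>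
    (laplaceSeries_pos ha hx hs hi hF).ne')).congr fun _ hF =>
      mul_eq_log_sub_log_laplaceSeries ha hs hi hφ hF

theorem strictMonoOn_mul_of_exp_mul_eq_laplaceSeries (ha : ∀ n, 0 ≤ a n) (hx : ∀ n, 0 < x n)
    (hs : Summable a) {i : ℕ} (hi : 0 < a i)
    (hφ : ∀ F, 0 ≤ F → exp (-F * φ F) * ∑' n, a n = laplaceSeries a x F) :
    StrictMonoOn (fun F => F * φ F) (Ici 0) := by
  intro F hF F' hF' hlt
  have hx₀ : ∀ n, 0 ≤ x n := fun n => (hx n).le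
  simp only [mul_eq_log_sub_log_laplaceSeries ha hs hi hφ hF,
    mul_eq_log_sub_log_laplaceSeries ha hs hi hφ hF']
  exact sub_lt_sub_left (log_lt_log (laplaceSeries_pos ha hx₀ hs hi hF')
    (strictAntiOn_laplaceSeries ha hx hs hi hF hF' hlt)) _

theorem le_mul_of_exp_mul_eq_laplaceSeries (ha : ∀ n, 0 ≤ a n) (hx : ∀ n, 1 ≤ x n)
    (hs : Summable a) {i : ℕ} (hi : 0 < a i)
    (hφ : ∀ F, 0 ≤ F → exp (-F * φ F) * ∑' n, a n = laplaceSeries a x F) {F : ℝ} (hF : 0 ≤ F) :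
    F ≤ F * φ F := by
  have hx₀ : ∀ n, 0 ≤ x n := fun n => zero_le_one.trans (hx n)
  have hlog :=
    log_le_log (laplaceSeries_pos ha hx₀ hs hi hF) (laplaceSeries_le_exp_neg_mul ha hx hs hF)
  rw [log_mul (exp_pos _).ne' (hs.tsum_pos ha i hi).ne', log_exp] at hlog
  rw [mul_eq_log_sub_log_laplaceSeries ha hs hi hφ hF]
  linarith

end LaplaceSeries

namespace Matrix

variable {ι : Type*}

noncomputable def doobTransform (A : Matrix ι ι ℝ) (r : ℝ) (v : ι → ℝ) : Matrix ι ι ℝ :=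
  fun i j => A i j * v j / (r * v i)

theorem doobTransform_nonneg {A : Matrix ι ι ℝ} {r : ℝ} {v : ι → ℝ} (hA : ∀ i j, 0 ≤ A i j)
    (hr : 0 ≤ r) (hv : ∀ i, 0 ≤ v i) (i j : ι) : 0 ≤ doobTransform A r v i j :=
  div_nonneg (mul_nonneg (hA i j) (hv j)) (mul_nonneg hr (hv i))

theorem doobTransform_mulVec_one [Fintype ι] {A : Matrix ι ι ℝ} {r : ℝ} {v : ι → ℝ}
    (hAv : A *ᵥ v = r • v) (hr : r ≠ 0) (hv : ∀ i, v i ≠ 0) : doobTransform A r v *ᵥ 1 = 1 := by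
  funext i
  have hrow : ∑ j, A i j * v j = r * v i := congrFun hAv i
  simp only [mulVec, dotProduct, doobTransform, Pi.one_apply, mul_one]
  rw [← Finset.sum_div, hrow, div_self (mul_ne_zero hr (hv i))]

end Matrix

section TiltedTransferMatrix

variable {q : ℕ} {K : ℕ → ℝ}

theorem Kstar_nonneg (hK : ∀ n, 1 ≤ n → 0 ≤ K n) (e : Fin (q + 1)) : 0 ≤ Kstar q K e := by
  unfold Kstar
  split_ifs with he
  · exact tsum_nonneg fun n => hK _ (by omega)
  · exact hK _ (Nat.one_le_iff_ne_zero.2 he)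

theorem Qmat_nonneg (β : ℝ) (ρ : ℕ → ℝ) (hK : ∀ n, 1 ≤ n → 0 ≤ K n) (s t : Fin q → Fin (q + 1)) :
    0 ≤ Qmat q β K ρ 0 s t := by
  unfold Qmat
  rw [sub_zero, div_one]
  exact mul_nonneg (mul_nonneg (exp_pos _).le (Kstar_nonneg hK _)) (by split_ifs <;> norm_num)

/-- The logarithm `ε − F φ_F(t*_{q−1})` of the weight by which `QtiltF` tilts column `t`. -/
noncomputable def tiltLogWeight (q : ℕ) (ε : ℝ) (φF : ℝ → ℝ) (F : ℝ) (t : Fin q → Fin (q + 1)) :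
    ℝ :=
  ε - F * (if (lastE t).1 = 0 then φF F else ((lastE t).1 : ℝ))

variable {ε : ℝ} {φF : ℝ → ℝ}

theorem QtiltF_eq_mul_diagonal (β : ℝ) (ρ : ℕ → ℝ) (lam : ℝ) (νs : (Fin q → Fin (q + 1)) → ℝ)
    (F : ℝ) : QtiltF q β ε K ρ lam νs φF F =
      Matrix.doobTransform (Qmat q β K ρ 0) lam νs * diagonal (exp ∘ tiltLogWeight q ε φF F) := by
  ext s t
  rw [mul_diagonal]
  exact mul_comm _ _

theorem tiltLogWeight_zero : tiltLogWeight q ε φF 0 = fun _ => ε := by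
  funext t
  simp [tiltLogWeight]

theorem continuousOn_tiltLogWeight (hφ : ContinuousOn (fun F => F * φF F) (Ici 0))
    (t : Fin q → Fin (q + 1)) : ContinuousOn (tiltLogWeight q ε φF · t) (Ici 0) := by
  by_cases ht : (lastE t).1 = 0
  · simp only [tiltLogWeight, ht, if_true]
    exact continuousOn_const.sub hφ
  · simp only [tiltLogWeight, ht, if_false]
    fun_prop

theorem strictAntiOn_tiltLogWeight (hφ : StrictMonoOn (fun F => F * φF F) (Ici 0))
    (t : Fin q → Fin (q + 1)) : StrictAntiOn (tiltLogWeight q ε φF · t) (Ici 0) := by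
  intro F hF F' hF' hlt
  by_cases ht : (lastE t).1 = 0
  · simpa only [tiltLogWeight, ht, if_true, sub_lt_sub_iff_left] using hφ hF hF' hlt
  · have hpos : (0 : ℝ) < (lastE t).1 := by exact_mod_cast Nat.pos_of_ne_zero ht
    simp only [tiltLogWeight, ht, if_false, sub_lt_sub_iff_left]
    exact mul_lt_mul_of_pos_right hlt hpos

theorem tiltLogWeight_le_sub (hφ : ∀ F, 0 ≤ F → F ≤ F * φF F) {F : ℝ} (hF : 0 ≤ F)
    (t : Fin q → Fin (q + 1)) : tiltLogWeight q ε φF F t ≤ tiltLogWeight q ε φF 0 t - F := by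
  rw [tiltLogWeight_zero]
  by_cases ht : (lastE t).1 = 0
  · simpa only [tiltLogWeight, ht, if_true, sub_le_sub_iff_left] using hφ F hF
  · have hone : (1 : ℝ) ≤ (lastE t).1 := by exact_mod_cast Nat.one_le_iff_ne_zero.2 ht
    simp only [tiltLogWeight, ht, if_false, sub_le_sub_iff_left]
    nlinarith

end TiltedTransferMatrix

theorem tilted_pf_eigenvalue_crosses_one_general
    (q : ℕ) (K : ℕ → ℝ)
    (hKpos : ∀ n, 1 ≤ n → 0 < K n) (hKsum : Summable K)
    (ρ : ℕ → ℝ) (β : ℝ)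
    (lam : ℝ) (hlampos : 0 < lam) (νs : (Fin q → Fin (q + 1)) → ℝ)
    (hνpos : ∀ u, 0 < νs u)
    (heig : Qmat q β K ρ 0 *ᵥ νs = lam • νs)
    (ε : ℝ) (hε : 0 < ε)
    (φF : ℝ → ℝ)  -- φ_F(⋆), defined by e^{−F φ_F(⋆)} K(⋆) = ∑_{t>q} e^{−Ft} K(t)
    (hφ : ∀ F : ℝ, 0 ≤ F →
      Real.exp (-F * φF F) * (∑' n : ℕ, K (n + q + 1)) =
        ∑' n : ℕ, Real.exp (-F * ((n : ℝ) + q + 1)) * K (n + q + 1))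
    (lamF : ℝ → ℝ)
    (hlamF : ∀ F : ℝ, 0 ≤ F → ∃ v : (Fin q → Fin (q + 1)) → ℝ,
      (∀ u, 0 < v u) ∧ QtiltF q β ε K ρ lam νs φF F *ᵥ v = lamF F • v) :
    ContinuousOn lamF (Set.Ioi 0) ∧
    StrictAntiOn lamF (Set.Ioi 0) ∧
    Tendsto lamF atTop (nhds 0) ∧
    lamF 0 = Real.exp ε ∧
    (∃! F : ℝ, 0 < F ∧ lamF F = 1) := by
  set D := Matrix.doobTransform (Qmat q β K ρ 0) lam νs
  have hD : ∀ s t, 0 ≤ D s t := Matrix.doobTransform_nonneg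
    (Qmat_nonneg β ρ fun n hn => (hKpos n hn).le) hlampos.le fun u => (hνpos u).le
  have hD1 : D *ᵥ 1 = 1 :=
    Matrix.doobTransform_mulVec_one heig hlampos.ne' fun u => (hνpos u).ne'
  have hr : ∀ F, 0 ≤ F →
      (D * diagonal (exp ∘ tiltLogWeight q ε φF F)).HasPosEigenvector (lamF F) :=
    fun F hF => QtiltF_eq_mul_diagonal β ρ lam νs F ▸ hlamF F hF
  have ha : ∀ n, 0 ≤ K (n + q + 1) := fun n => (hKpos _ (by omega)).le
  have ha₀ : 0 < K (0 + q + 1) := hKpos _ (by omega)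
  have hs : Summable fun n => K (n + q + 1) := (summable_nat_add_iff (q + 1)).2 hKsum
  have hx : ∀ n : ℕ, (1 : ℝ) ≤ n + q + 1 := fun n => by
    linarith [(n.cast_nonneg : (0 : ℝ) ≤ n), (q.cast_nonneg : (0 : ℝ) ≤ q)]
  have hcont : ContinuousOn lamF (Ici 0) :=
    continuousOn_of_hasPosEigenvector_mul_diagonal_exp hD (continuousOn_tiltLogWeight
      (continuousOn_mul_of_exp_mul_eq_laplaceSeries ha (fun n => zero_le_one.trans (hx n)) hs
        ha₀ hφ)) hr
  have hanti : StrictAntiOn lamF (Ici 0) :=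
    strictAntiOn_of_hasPosEigenvector_mul_diagonal_exp hD (Matrix.exists_pos_of_mulVec_one hD hD1)
      (strictAntiOn_tiltLogWeight (strictMonoOn_mul_of_exp_mul_eq_laplaceSeries ha
        (fun n => zero_lt_one.trans_le (hx n)) hs ha₀ hφ)) hr
  have hlim : Tendsto lamF atTop (𝓝 0) :=
    tendsto_zero_of_hasPosEigenvector_mul_diagonal_exp hD (fun F hF => tiltLogWeight_le_sub
      (fun F hF => le_mul_of_exp_mul_eq_laplaceSeries ha hx hs ha₀ hφ hF) hF) hr
  have hlam0 : lamF 0 = exp ε := by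
    have hD0 : D * diagonal (exp ∘ tiltLogWeight q ε φF 0) = exp ε • D := by
      ext s t
      simp [tiltLogWeight_zero, mul_diagonal, mul_comm]
    refine (hr 0 le_rfl).unique (mul_diagonal_exp_nonneg hD _) ?_
    simpa [hD0] using (Matrix.hasPosEigenvector_one_of_mulVec_one hD1).smul (exp ε)
  exact ⟨hcont.mono Ioi_subset_Ici_self, hanti.mono Ioi_subset_Ici_self, hlim, hlam0,
    existsUnique_gt_and_eq_of_strictAntiOn_Ici hcont hanti hlim one_pos
      (hlam0 ▸ one_lt_exp_iff.2 hε)⟩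

/-- Existence and uniqueness of `F̃(ε) > 0` with `λ_{F̃(ε)} = 1`: the Perron–Frobenius
eigenvalue `λ_F` of `Q̃*_{β,F}` is continuous and strictly decreasing on `(0,∞)`,
tends to `0` as `F → ∞`, and `λ_0 = e^ε > 1`. -/
theorem tilted_pf_eigenvalue_crosses_one
    (q : ℕ) (hq : 1 ≤ q) (K : ℕ → ℝ) (hK0 : K 0 = 0)
    (hKpos : ∀ n, 1 ≤ n → 0 < K n) (hKsum : Summable K)
    (hrec : ∑' n : ℕ, K (n + 1) = 1)  -- recurrence: K(∞) = 0
    (ρ : ℕ → ℝ) (hρ : ∀ k, q < k → ρ k = 0) (β : ℝ)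
    (lam : ℝ) (hlampos : 0 < lam) (νs : (Fin q → Fin (q + 1)) → ℝ)
    (hνpos : ∀ u, 0 < νs u)
    (heig : Qmat q β K ρ 0 *ᵥ νs = lam • νs)
    (ε : ℝ) (hε : 0 < ε)
    (φF : ℝ → ℝ)  -- φ_F(⋆), defined by e^{−F φ_F(⋆)} K(⋆) = ∑_{t>q} e^{−Ft} K(t)
    (hφ : ∀ F : ℝ, 0 ≤ F →
      Real.exp (-F * φF F) * (∑' n : ℕ, K (n + q + 1)) =
        ∑' n : ℕ, Real.exp (-F * ((n : ℝ) + q + 1)) * K (n + q + 1))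
    (lamF : ℝ → ℝ)
    (hlamF : ∀ F : ℝ, 0 ≤ F → ∃ v : (Fin q → Fin (q + 1)) → ℝ,
      (∀ u, 0 < v u) ∧ QtiltF q β ε K ρ lam νs φF F *ᵥ v = lamF F • v) :
    ContinuousOn lamF (Set.Ioi 0) ∧
    StrictAntiOn lamF (Set.Ioi 0) ∧
    Tendsto lamF atTop (nhds 0) ∧
    lamF 0 = Real.exp ε ∧
    (∃! F : ℝ, 0 < F ∧ lamF F = 1) :=
  tilted_pf_eigenvalue_crosses_one_general q K hKpos hKsum ρ β lam hlampos νs hνpos heig ε hε φF hφ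
    lamF hlamF
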